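/- arXiv:2011.10691 — 3 statements merged into one kernel-verified Lean document; each statement's English description precedes it below -/
import Mathlib

section
/- For every rational number x and all integers r ≥ 0 and m ≥ r+1, one has C(r+x, m) = (-1)^r · ∑_{l=0}^{r} (-1)^l · C(r+x, l) · C(m-l-1, r-l) · C(r-l+x, m-l). -/
open Finset

/-- The generalized binomial coefficient C(x, k) = x(x-1)⋯(x-k+1)/k! for x ∈ ℚ. -/
def gchoose (x : ℚ) (k : ℕ) : ℚ :=
  (∏ i ∈ Finset.range k, (x - i)) / (Nat.factorial k)

lemma descPochhammer_smeval_rat (x : ℚ) (k : ℕ) :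
    (descPochhammer ℤ k).smeval x = ∏ i ∈ Finset.range k, (x - i) := by
  induction k with
  | zero => simp
  | succ n ih =>
    rw [descPochhammer_succ_right, Polynomial.smeval_mul, ih, Finset.prod_range_succ]
    congr 1
    simp [Polynomial.smeval_sub, Polynomial.smeval_X, Polynomial.smeval_natCast]

lemma gchoose_eq (x : ℚ) (k : ℕ) : gchoose x k = Ring.choose x k := by
  have h := Ring.descPochhammer_eq_factorial_smul_choose x k
  rw [descPochhammer_smeval_rat, nsmul_eq_mul] at h
  rw [gchoose, h]
  field_simp

lemma gchoose_natCast (n k : ℕ) : gchoose (n : ℚ) k = (n.choose k : ℚ) := by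
  rw [gchoose_eq, Ring.choose_natCast]

lemma gchoose_neg (n k : ℕ) :
    gchoose (-(n : ℚ)) k = (-1) ^ k * ((n + k - 1).choose k : ℚ) := by
  have hprod : ∏ i ∈ Finset.range k, (-(n : ℚ) - i)
      = (-1) ^ k * (n.ascFactorial k : ℚ) := by
    induction k with
    | zero => simp
    | succ j ih =>
      rw [Finset.prod_range_succ, ih, Nat.ascFactorial_succ]
      push_cast
      ring
  rw [gchoose, hprod, Nat.ascFactorial_eq_factorial_mul_choose']
  have : (Nat.factorial k : ℚ) ≠ 0 := by positivity
  push_cast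
  field_simp

lemma gchoose_add (a b : ℚ) (n : ℕ) :
    gchoose (a + b) n = ∑ l ∈ Finset.range (n + 1), gchoose a l * gchoose b (n - l) := by
  rw [gchoose_eq, Ring.add_choose_eq n (Commute.all a b),
    Finset.Nat.sum_antidiagonal_eq_sum_range_succ (fun i j => Ring.choose a i * Ring.choose b j)]
  simp [gchoose_eq]

lemma gchoose_mul (a : ℚ) (l m : ℕ) (h : l ≤ m) :
    gchoose a l * gchoose (a - l) (m - l) = (m.choose l : ℚ) * gchoose a m := by
  have hsplit : ∏ i ∈ Finset.range m, (a - i)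
      = (∏ i ∈ Finset.range l, (a - i)) * ∏ i ∈ Finset.range (m - l), (a - l - i) :=
    calc ∏ i ∈ Finset.range m, (a - (i:ℚ))
        = ∏ i ∈ Finset.range (l + (m - l)), (a - i) := by rw [Nat.add_sub_cancel' h]
      _ = (∏ i ∈ Finset.range l, (a - i)) * ∏ i ∈ Finset.range (m - l), (a - l - i) := by
          rw [Finset.prod_range_add]
          congr 1
          apply Finset.prod_congr rfl
          intro i _
          push_cast
          ring
  have hfac : ((m.choose l : ℚ)) * (Nat.factorial l) * (Nat.factorial (m - l))
      = (Nat.factorial m) := by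
    exact_mod_cast congrArg (Nat.cast : ℕ → ℚ) (Nat.choose_mul_factorial_mul_factorial h)
  have h1 : (Nat.factorial l : ℚ) ≠ 0 := by positivity
  have h2 : (Nat.factorial (m - l) : ℚ) ≠ 0 := by positivity
  have h3 : (Nat.factorial m : ℚ) ≠ 0 := by positivity
  have h4 : ((m.choose l : ℕ) : ℚ) ≠ 0 := by
    have := Nat.choose_pos h
    positivity
  rw [gchoose, gchoose, gchoose, div_mul_div_comm, ← hsplit, ← hfac]
  field_simp

lemma key_sum (r m : ℕ) (hm : r + 1 ≤ m) :
    ∑ l ∈ Finset.range (r + 1),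
      (-1 : ℚ) ^ l * (m.choose l : ℚ) * ((m - l - 1).choose (r - l) : ℚ) = (-1) ^ r := by
  have hadd : ((m : ℚ)) + (-(((m - r : ℕ)) : ℚ)) = (r : ℚ) := by
    have : ((m - r : ℕ) : ℚ) = (m : ℚ) - r := by
      push_cast [Nat.cast_sub (le_of_lt hm)]; ring
    rw [this]; ring
  have hv := gchoose_add (m : ℚ) (-(((m - r : ℕ)) : ℚ)) r
  rw [hadd, gchoose_natCast, Nat.choose_self] at hv
  have hterm : ∀ l ∈ Finset.range (r + 1),
      gchoose (m : ℚ) l * gchoose (-(((m - r : ℕ)) : ℚ)) (r - l)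
        = (-1) ^ r * ((-1 : ℚ) ^ l * (m.choose l : ℚ) * ((m - l - 1).choose (r - l) : ℚ)) := by
    intro l hl
    have hlr : l ≤ r := Nat.lt_succ_iff.mp (Finset.mem_range.mp hl)
    rw [gchoose_natCast, gchoose_neg]
    have hidx : (m - r) + (r - l) - 1 = m - l - 1 := by omega
    rw [hidx]
    have hsign : ((-1 : ℚ)) ^ (r - l) = (-1) ^ r * (-1) ^ l := by
      have h2 : r - l + l = r := Nat.sub_add_cancel hlr
      have h3 : ((-1 : ℚ)) ^ r = (-1) ^ (r - l) * (-1) ^ l := by rw [← pow_add, h2]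
      rw [h3, mul_assoc, ← pow_add, ← two_mul, pow_mul]
      norm_num
    rw [hsign]; ring
  rw [Finset.sum_congr rfl hterm, ← Finset.mul_sum, Nat.cast_one] at hv
  have hsq : ((-1 : ℚ)) ^ r * (-1) ^ r = 1 := by
    rw [← pow_add, ← two_mul, pow_mul]; norm_num
  have h5 := congrArg (fun t => ((-1 : ℚ)) ^ r * t) hv
  simp only [mul_one] at h5
  rw [h5, ← mul_assoc, hsq, one_mul]

/-- Coefficient identity encoding Proposition 7.1 of the paper. -/
theorem prop_7_1_coefficients (x : ℚ) (r m : ℕ) (hm : r + 1 ≤ m) :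
    gchoose ((r : ℚ) + x) m
      = (-1 : ℚ) ^ r * ∑ l ∈ Finset.range (r + 1),
          (-1 : ℚ) ^ l * gchoose ((r : ℚ) + x) l * ((m - l - 1).choose (r - l) : ℚ)
            * gchoose ((r : ℚ) - (l : ℚ) + x) (m - l) := by
  set a := (r : ℚ) + x with ha
  have hterm : ∀ l ∈ Finset.range (r + 1),
      (-1 : ℚ) ^ l * gchoose a l * ((m - l - 1).choose (r - l) : ℚ)
          * gchoose ((r : ℚ) - (l : ℚ) + x) (m - l)
        = ((-1 : ℚ) ^ l * (m.choose l : ℚ) * ((m - l - 1).choose (r - l) : ℚ)) * gchoose a m := by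
    intro l hl
    have hlr : l ≤ r := Nat.lt_succ_iff.mp (Finset.mem_range.mp hl)
    have hlm : l ≤ m := le_trans hlr (by omega)
    have hx : (r : ℚ) - (l : ℚ) + x = a - l := by rw [ha]; ring
    rw [hx]
    have := gchoose_mul a l m hlm
    calc (-1 : ℚ) ^ l * gchoose a l * ((m - l - 1).choose (r - l) : ℚ) * gchoose (a - l) (m - l)
        = (-1 : ℚ) ^ l * ((m - l - 1).choose (r - l) : ℚ)
            * (gchoose a l * gchoose (a - l) (m - l)) := by ring
      _ = _ := by rw [this]; ring
  rw [Finset.sum_congr rfl hterm, ← Finset.sum_mul, key_sum r m hm, ← mul_assoc, ← pow_add,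
    ← two_mul, pow_mul]
  norm_num
end

section
/- Let n ≥ 2 and 1 ≤ p ≤ n be integers, and let r ≥ 1, s ≥ 0, 0 ≤ i ≤ s be integers. Then (ns+p)(nr-p) · C(-i - p/n, s-i) · C(i + p/n, r+i) = (-1)^{r+s+i-1} · p·(ni+p) · (r!·s! / ((r+i)!·(s-i)!)) · C(s + p/n, s) · C(r - p/n, r). -/
open Polynomial

section Pochhammer

variable {R : Type*} [CommRing R]

theorem ascPochhammer_eval_mul_eval_add (y : R) (n m : ℕ) :
    (ascPochhammer R n).eval y * (ascPochhammer R m).eval (y + n) =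
      (ascPochhammer R (n + m)).eval y := by
  simpa using congrArg (eval y) (ascPochhammer_mul R n m)

theorem descPochhammer_eval_neg (y : R) (k : ℕ) :
    (descPochhammer R k).eval (-y) = (-1) ^ k * (ascPochhammer R k).eval y := by
  rw [← neg_neg y, ascPochhammer_eval_neg_eq_descPochhammer, neg_neg, ← mul_assoc, ← mul_pow]
  simp

theorem ascPochhammer_eval_mul_eval_overlap (x : R) (i d : ℕ) :
    (x + i + d) * (ascPochhammer R d).eval (x + i) * (ascPochhammer R i).eval (x + 1) =
      (x + i) * (ascPochhammer R (i + d)).eval (x + 1) := by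
  have h := ascPochhammer_eval_mul_eval_add (x + i) 1 d
  rw [ascPochhammer_one, eval_X, add_comm 1 d, ascPochhammer_succ_eval] at h
  rw [← ascPochhammer_eval_mul_eval_add (x + 1) i d]
  linear_combination (norm := ring_nf) -(ascPochhammer R i).eval (x + 1) * h

end Pochhammer

theorem gchoose_eq_descPochhammer_eval_div (x : ℚ) (k : ℕ) :
    gchoose x k = (descPochhammer ℚ k).eval x / k.factorial := by
  rw [gchoose, descPochhammer_eval_eq_prod_range]

open Nat in
theorem gchoose_product_identity (x : ℚ) {r s i : ℕ} (hr : 1 ≤ r) (hi : i ≤ s) :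
    (s + x) * (r - x) * gchoose (-i - x) (s - i) * gchoose (i + x) (r + i)
      = (-1) ^ (r + s + i - 1) * x * (i + x) * (r ! * s ! / ((r + i)! * (s - i)!))
          * gchoose (s + x) s * gchoose (r - x) r := by
  obtain ⟨d, rfl⟩ := Nat.exists_eq_add_of_le hi
  obtain ⟨r, rfl⟩ := Nat.exists_eq_add_of_le' hr
  have hneg : (descPochhammer ℚ d).eval (-i - x) =
      (-1) ^ d * (ascPochhammer ℚ d).eval (x + i) := by
    rw [← descPochhammer_eval_neg]; ring_nf
  have hsplit : (descPochhammer ℚ (r + 1 + i)).eval (i + x) =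
      (ascPochhammer ℚ r).eval (x - r) * x * (ascPochhammer ℚ i).eval (x + 1) := by
    rw [descPochhammer_eval_eq_ascPochhammer, ← ascPochhammer_eval_mul_eval_add,
      ascPochhammer_succ_eval]
    push_cast; ring_nf
  have hshift : (descPochhammer ℚ (i + d)).eval ((i + d : ℕ) + x) =
      (ascPochhammer ℚ (i + d)).eval (x + 1) := by
    rw [descPochhammer_eval_eq_ascPochhammer]; ring_nf
  have hreflect : (descPochhammer ℚ (r + 1)).eval ((r + 1 : ℕ) - x) =
      (-1) ^ r * ((r + 1 - x) * (ascPochhammer ℚ r).eval (x - r)) := by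
    rw [show ((r + 1 : ℕ) : ℚ) - x = -(x - r - 1) by push_cast; ring, descPochhammer_eval_neg,
      add_comm r 1, ← ascPochhammer_eval_mul_eval_add, ascPochhammer_one, eval_X]
    push_cast; ring_nf
  have hsign : (-1 : ℚ) ^ (r + 1 + (i + d) + i - 1) = (-1) ^ d * (-1) ^ r := by
    rw [show r + 1 + (i + d) + i - 1 = d + r + 2 * i by omega, pow_add, pow_add, pow_mul]
    norm_num
  have hsq : (-1 : ℚ) ^ r * (-1) ^ r = 1 := by rw [← mul_pow]; norm_num
  simp only [gchoose_eq_descPochhammer_eval_div, Nat.add_sub_cancel_left, hneg, hsplit, hshift,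
    hreflect, hsign]
  field_simp
  push_cast
  linear_combination
    x * (r + 1 - x) * (ascPochhammer ℚ r).eval (x - r) * ascPochhammer_eval_mul_eval_overlap x i d
    - x * (ascPochhammer ℚ r).eval (x - r) * (i + x) * (ascPochhammer ℚ (i + d)).eval (x + 1)
      * (r + 1 - x) * hsq

theorem prop_8_1_product_identity_general (n p r s i : ℕ) (hn : 2 ≤ n)
    (hr : 1 ≤ r) (hi : i ≤ s) :
    ((n : ℚ) * s + p) * ((n : ℚ) * r - p)
        * gchoose (-(i : ℚ) - (p : ℚ) / (n : ℚ)) (s - i)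
        * gchoose ((i : ℚ) + (p : ℚ) / (n : ℚ)) (r + i)
      = (-1 : ℚ) ^ (r + s + i - 1) * (p : ℚ) * ((n : ℚ) * i + p)
          * ((r.factorial : ℚ) * (s.factorial : ℚ)
              / (((r + i).factorial : ℚ) * ((s - i).factorial : ℚ)))
          * gchoose ((s : ℚ) + (p : ℚ) / (n : ℚ)) s
          * gchoose ((r : ℚ) - (p : ℚ) / (n : ℚ)) r := by
  have hn0 : (n : ℚ) ≠ 0 := Nat.cast_ne_zero.mpr (by omega)
  have key := gchoose_product_identity ((p : ℚ) / n) hr hi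
  set x := (p : ℚ) / n
  rw [show (p : ℚ) = n * x from (mul_div_cancel₀ _ hn0).symm]
  linear_combination (n : ℚ) ^ 2 * key

/-- Product identity from the proof of Proposition 8.1 of the paper. -/
theorem prop_8_1_product_identity (n p r s i : ℕ) (hn : 2 ≤ n) (hp1 : 1 ≤ p) (hpn : p ≤ n)
    (hr : 1 ≤ r) (hi : i ≤ s) :
    ((n : ℚ) * s + p) * ((n : ℚ) * r - p)
        * gchoose (-(i : ℚ) - (p : ℚ) / (n : ℚ)) (s - i)
        * gchoose ((i : ℚ) + (p : ℚ) / (n : ℚ)) (r + i)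
      = (-1 : ℚ) ^ (r + s + i - 1) * (p : ℚ) * ((n : ℚ) * i + p)
          * ((r.factorial : ℚ) * (s.factorial : ℚ)
              / (((r + i).factorial : ℚ) * ((s - i).factorial : ℚ)))
          * gchoose ((s : ℚ) + (p : ℚ) / (n : ℚ)) s
          * gchoose ((r : ℚ) - (p : ℚ) / (n : ℚ)) r :=
  prop_8_1_product_identity_general n p r s i hn hr hi
end

section
/- Let n ≥ 2 be an integer and α a complex number. Define q_{nr-p, ns+p} := α^{r+s} · (p·r/(r+s)) · C(r - p/n, r) · C(s + p/n, s) for integers r ≥ 1, s ≥ 0, 1 ≤ p ≤ n-1, set q_{i,j} := q_{j,i}, and set q_{i,j} := 0 whenever i+j ≢ 0 (mod n) or j ≡ 0 (mod n). Let Q ∈ ℂ[[z]] be the formal power series whose coefficient of z^N is ∑_{i+j=N, i,j≥1} q_{i,j}/(i·j). Then the formal-power-series exponential of Q equals the binomial series of (1-αz^n)^{(1-n)/n}, i.e. exp(Q) = ∑_{m≥0} (-α)^m · C((1-n)/n, m) · z^{nm}. -/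
/-- The generalized binomial coefficient C(x, k) = x(x-1)⋯(x-k+1)/k! for x ∈ ℂ. -/
noncomputable def cchoose (x : ℂ) (k : ℕ) : ℂ :=
  (∏ i ∈ Finset.range k, (x - i)) / (Nat.factorial k)

/-- The formal power series `Q` with coefficient of `z^N` equal to
`∑_{i+j=N, i,j ≥ 1} q_{i,j} / (i·j)`. -/
noncomputable def Qseries (q : ℕ → ℕ → ℂ) : PowerSeries ℂ :=
  PowerSeries.mk fun N =>
    ∑ ij ∈ Finset.HasAntidiagonal.antidiagonal N,
      if 1 ≤ ij.1 ∧ 1 ≤ ij.2 then q ij.1 ij.2 / ((ij.1 : ℂ) * (ij.2 : ℂ)) else 0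

/-- The exponential `exp(f) = ∑_{m≥0} f^m/m!` of a formal power series `f` with zero
constant term: since `coeff N (f^m) = 0` for `m > N`, the coefficient of `z^N` is the
finite sum `∑_{m=0}^{N} coeff N (f^m)/m!`. -/
noncomputable def psExp (f : PowerSeries ℂ) : PowerSeries ℂ :=
  PowerSeries.mk fun N =>
    ∑ m ∈ Finset.range (N + 1), (PowerSeries.coeff N (f ^ m)) / (Nat.factorial m)

/-!
With `β = (1 - n)/n` and `u = -α z^n`, the series `Q` is `β · log (1 + u)`: writing
`i = n r - p`, `j = n s + p`, the terms of the coefficient of `z^{nm}` with a fixed residue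
`0 < p < n` are products of two multichoose coefficients and add up, by Chu–Vandermonde, to
`α^m / (n m)`. Hence `exp Q` is the substitution of `u` into `exp (β · log (1 + X))`, and the
latter is the binomial series `(1 + X)^β` because both solve `(1 + X) F' = β F` with `F(0) = 1`.
-/

open Finset PowerSeries

namespace Ring

variable {R : Type*} [CommRing R] [BinomialRing R]

theorem succ_mul_choose_succ_eq_sub_mul (r : R) (k : ℕ) :
    (k + 1 : R) * choose r (k + 1) = (r - k) * choose r k := by
  have h := choose_smul_choose r (Nat.le_add_right k 1)
  rw [Nat.choose_succ_self_right, Nat.add_sub_cancel_left, choose_one_right, nsmul_eq_mul] at h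
  push_cast at h
  rw [h, mul_comm]

theorem succ_mul_choose_succ_eq_mul_choose_sub_one (r : R) (k : ℕ) :
    (k + 1 : R) * choose r (k + 1) = r * choose (r - 1) k := by
  have h := choose_smul_choose r (Nat.le_add_left 1 k)
  rw [Nat.choose_one_right, Nat.add_sub_cancel, choose_one_right, nsmul_eq_mul, Nat.cast_one] at h
  push_cast at h
  rw [h]

theorem mul_choose_succ_mul_choose_eq (x : R) (a s : ℕ) :
    x * ((a + 1 : R) * choose (a + 1 - x) (a + 1)) * choose (s + x) s
      = (a + 1 - x) * (s + x) * (multichoose (1 - x) a * multichoose x s) := by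
  have h1 := succ_mul_choose_succ_eq_mul_choose_sub_one (a + 1 - x) a
  have h2 := succ_mul_choose_succ_eq_sub_mul ((s : R) + x) s
  have h3 := succ_mul_choose_succ_eq_mul_choose_sub_one ((s : R) + x) s
  rw [multichoose_eq, multichoose_eq, show 1 - x + a - 1 = a + 1 - x - 1 by ring,
    show x + s - 1 = s + x - 1 by ring, h1]
  linear_combination (a + 1 - x) * choose (a + 1 - x - 1) a * (h3 - h2)

theorem multichoose_eq_negOnePow_smul_choose_neg (r : R) (k : ℕ) :
    multichoose r k = Int.negOnePow k • choose (-r) k := by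
  rw [choose_neg', smul_smul, ← Int.negOnePow_add, Int.negOnePow_even _ ⟨k, rfl⟩, one_smul]

theorem add_multichoose_eq (r s : R) (k : ℕ) :
    multichoose (r + s) k = ∑ ab ∈ antidiagonal k, multichoose r ab.1 * multichoose s ab.2 := by
  simp only [multichoose_eq_negOnePow_smul_choose_neg, neg_add,
    add_choose_eq k (Commute.all (-r) (-s)), smul_sum]
  refine sum_congr rfl fun ab hab => ?_
  rw [smul_mul_smul_comm, ← Int.negOnePow_add, ← Nat.cast_add, mem_antidiagonal.mp hab]

end Ring

theorem Finset.Nat.sum_antidiagonal_mul_succ {M : Type*} [AddCommMonoid M] {n : ℕ} (K : ℕ)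
    (g : ℕ × ℕ → M) (hg : ∀ i j, n ∣ j → g (i, j) = 0) :
    ∑ ij ∈ antidiagonal (n * (K + 1)), g ij
      = ∑ p ∈ Ico 1 n, ∑ as ∈ antidiagonal K, g (n * (as.1 + 1) - p, n * as.2 + p) := by
  rw [← sum_product']
  symm
  refine sum_of_injOn (fun t => (n * (t.2.1 + 1) - t.1, n * t.2.2 + t.1)) ?_ ?_ ?_ (fun _ _ => rfl)
  · rintro ⟨p, a, s⟩ ht ⟨p', a', s'⟩ ht' he
    simp only [coe_product, coe_Ico, Set.mem_prod, Set.mem_Ico, mem_coe,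
      HasAntidiagonal.mem_antidiagonal, Prod.mk.injEq] at ht ht' he
    have hp : p = p' := by
      have := congrArg (· % n) he.2
      simpa only [Nat.mul_add_mod, Nat.mod_eq_of_lt ht.1.2, Nat.mod_eq_of_lt ht'.1.2] using this
    subst hp
    have hs : s = s' := Nat.eq_of_mul_eq_mul_left (n := n) (by omega) (by omega)
    subst hs
    obtain rfl : a = a' := by omega
    rfl
  · rintro ⟨p, a, s⟩ ht
    simp only [coe_product, coe_Ico, Set.mem_prod, Set.mem_Ico, mem_coe,
      HasAntidiagonal.mem_antidiagonal] at ht ⊢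
    have hsum : n * (a + 1) + n * s = n * (K + 1) := by rw [← mul_add]; congr 1; omega
    have hle : n ≤ n * (a + 1) := Nat.le_mul_of_pos_right n a.succ_pos
    omega
  · rintro ⟨i, j⟩ hij hne
    rw [HasAntidiagonal.mem_antidiagonal] at hij
    by_cases hj : n ∣ j
    · exact hg i j hj
    exfalso
    have hn : 0 < n := Nat.pos_of_ne_zero (by rintro rfl; simp_all)
    have hjn : j % n ≠ 0 := fun h => hj (Nat.dvd_of_mod_eq_zero h)
    have hjK : j / n < K + 1 := by
      rw [Nat.div_lt_iff_lt_mul hn, mul_comm]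
      exact lt_of_le_of_ne (by omega) fun h => hj ⟨K + 1, h⟩
    have hsum : n * (K - j / n + 1) + n * (j / n) = n * (K + 1) := by
      rw [← mul_add]; congr 1; omega
    have hdiv := Nat.div_add_mod j n
    have hmod := Nat.mod_lt j hn
    apply hne
    refine ⟨(j % n, K - j / n, j / n), ?_, ?_⟩
    · simp only [coe_product, coe_Ico, Set.mem_prod, Set.mem_Ico, mem_coe,
        HasAntidiagonal.mem_antidiagonal]
      omega
    · simp only [Prod.mk.injEq]
      omega

namespace PowerSeries

theorem coeff_pow_eq_zero_of_lt {R : Type*} [Semiring R] {f : R⟦X⟧} (hf : constantCoeff f = 0)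
    {N m : ℕ} (h : N < m) : coeff N (f ^ m) = 0 :=
  coeff_of_lt_order _ ((Nat.cast_lt.mpr h).trans_le (le_order_pow_of_constantCoeff_eq_zero m hf))

theorem constantCoeff_subst_of_constantCoeff_eq_zero {R : Type*} [CommRing R] {a : R⟦X⟧}
    (ha : constantCoeff a = 0) (f : R⟦X⟧) : constantCoeff (f.subst a) = constantCoeff f := by
  rw [← coeff_zero_eq_constantCoeff_apply, coeff_subst' (.of_constantCoeff_zero' ha),
    finsum_eq_single _ 0]
  · simp
  · intro d hd
    simp [coeff_pow_eq_zero_of_lt ha (Nat.pos_of_ne_zero hd)]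

theorem coeff_subst_smul_X_pow {R : Type*} [CommRing R] {n : ℕ} (hn : n ≠ 0) (a : R)
    (f : R⟦X⟧) (N : ℕ) :
    coeff N (f.subst (a • X ^ n : R⟦X⟧))
      = if n ∣ N then a ^ (N / n) * coeff (N / n) f else 0 := by
  have hsubst : f.subst (a • X ^ n : R⟦X⟧) = (rescale a f).subst (X ^ n : R⟦X⟧) := by
    rw [rescale_eq_subst, subst_comp_subst_apply (HasSubst.smul' a HasSubst.X') (.X_pow hn),
      subst_smul (.X_pow hn), subst_X (.X_pow hn)]
  rw [hsubst, coeff_subst_X_pow hn, coeff_rescale]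
  rfl

section Field

variable {K : Type*} [Field K] [CharZero K]

theorem eq_of_derivative_mul_eq_mul_derivative {F G : K⟦X⟧} (hG : constantCoeff G ≠ 0)
    (h0 : constantCoeff F = constantCoeff G) (h : d⁄dX K F * G = F * d⁄dX K G) : F = G := by
  have hinv : G⁻¹ * G = 1 := PowerSeries.inv_mul_cancel G hG
  have hquot : F * G⁻¹ = 1 := by
    refine derivative.ext ?_ ?_
    · rw [Derivation.leibniz, derivative_inv', derivative_one, smul_eq_mul, smul_eq_mul]
      linear_combination G⁻¹ ^ 2 * h - G⁻¹ * d⁄dX K F * hinv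
    · simp [h0, hG]
  calc F = F * G⁻¹ * G := by rw [mul_assoc, hinv, mul_one]
    _ = G := by rw [hquot, one_mul]

theorem one_add_X_mul_derivative_log : (1 + X) * d⁄dX K (log K) = 1 := by
  ext N
  rw [deriv_log]
  cases N with
  | zero => simp
  | succ N => simp [add_mul, coeff_succ_X_mul, pow_succ]

theorem one_add_X_mul_derivative_binomialSeries (β : K) :
    (1 + X) * d⁄dX K (binomialSeries K β) = C β * binomialSeries K β := by
  ext N
  rw [add_mul, one_mul, map_add, coeff_C_mul, coeff_derivative]
  cases N with
  | zero => simp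
  | succ N =>
    have h := Ring.succ_mul_choose_succ_eq_sub_mul β (N + 1)
    simp only [coeff_succ_X_mul, coeff_derivative, binomialSeries_coeff, smul_eq_mul, mul_one]
    push_cast at h ⊢
    linear_combination h

theorem exp_subst_smul_log (β : K) : (exp K).subst (β • log K) = binomialSeries K β := by
  set E : K⟦X⟧ := (exp K).subst (β • log K)
  have hE : (1 + X) * d⁄dX K E = C β * E := by
    rw [derivative_subst (HasSubst.smul' β HasSubst.log), derivative_exp, Derivation.map_smul,
      smul_eq_C_mul (d⁄dX K (log K))]
    linear_combination C β * E * one_add_X_mul_derivative_log (K := K)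
  have hX : (1 + X : K⟦X⟧) ≠ 0 := fun h => by simpa using congrArg constantCoeff h
  refine eq_of_derivative_mul_eq_mul_derivative (by simp) ?_ (mul_left_cancel₀ hX ?_)
  · simp [E, constantCoeff_subst_of_constantCoeff_eq_zero]
  · linear_combination binomialSeries K β * hE - E * one_add_X_mul_derivative_binomialSeries β

end Field

end PowerSeries

theorem cchoose_eq_choose (x : ℂ) (k : ℕ) : cchoose x k = Ring.choose x k := by
  rw [cchoose, Ring.choose_eq_smul, ← Polynomial.aeval_eq_smeval, Polynomial.aeval_def,
    ← Polynomial.eval_map, descPochhammer_map, descPochhammer_eval_eq_prod_range, smul_eq_mul,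
    div_eq_inv_mul]

theorem psExp_eq_exp_subst {f : ℂ⟦X⟧} (hf : constantCoeff f = 0) : psExp f = (exp ℂ).subst f := by
  ext N
  rw [psExp, coeff_mk, coeff_subst' (HasSubst.of_constantCoeff_zero' hf),
    finsum_eq_sum_of_support_subset _ (s := range (N + 1))]
  · refine sum_congr rfl fun m _ => ?_
    rw [coeff_exp, Algebra.smul_def]
    simp [div_eq_inv_mul]
  · intro m hm
    by_contra hN
    simp only [coe_range, Set.mem_Iio, not_lt] at hN
    exact hm (by simp [coeff_pow_eq_zero_of_lt hf (Nat.lt_of_succ_le hN)])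

def HasQCoeffs (n : ℕ) (α : ℂ) (q : ℕ → ℕ → ℂ) : Prop :=
  ∀ r s p : ℕ, 1 ≤ r → 1 ≤ p → p ≤ n - 1 →
    q (n * r - p) (n * s + p)
      = α ^ (r + s) * ((p : ℂ) * r / ((r : ℂ) + s))
          * cchoose ((r : ℂ) - (p : ℂ) / (n : ℂ)) r
          * cchoose ((s : ℂ) + (p : ℂ) / (n : ℂ)) s

section Qseries

variable {n : ℕ} {α : ℂ} {q : ℕ → ℕ → ℂ}

theorem Qseries_summand (hq : HasQCoeffs n α q) {p a s : ℕ} (hp : 1 ≤ p) (hpn : p < n) :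
    q (n * (a + 1) - p) (n * s + p) / (((n * (a + 1) - p : ℕ) : ℂ) * ((n * s + p : ℕ) : ℂ))
      = α ^ (a + s + 1) / (n * (a + s + 1))
          * (Ring.multichoose (1 - p / n : ℂ) a * Ring.multichoose (p / n : ℂ) s) := by
  have hlt : p < n * (a + 1) := hpn.trans_le (Nat.le_mul_of_pos_right n a.succ_pos)
  have hi0 : ((n * (a + 1) - p : ℕ) : ℂ) ≠ 0 := Nat.cast_ne_zero.mpr (by omega)
  have hj0 : ((n * s + p : ℕ) : ℂ) ≠ 0 := Nat.cast_ne_zero.mpr (by omega)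
  have hn : (n : ℂ) ≠ 0 := Nat.cast_ne_zero.mpr (by omega)
  have has : (a + s + 1 : ℂ) ≠ 0 := by exact_mod_cast (a + s).succ_ne_zero
  rw [hq (a + 1) s p a.succ_pos hp (by omega), cchoose_eq_choose, cchoose_eq_choose,
    show a + 1 + s = a + s + 1 by ring]
  set x : ℂ := p / n
  have hpx : (p : ℂ) = n * x := (mul_div_cancel₀ _ hn).symm
  have hi : ((n * (a + 1) - p : ℕ) : ℂ) = n * (a + 1 - x) := by
    rw [Nat.cast_sub hlt.le]; push_cast; rw [hpx]; ring
  have hj : ((n * s + p : ℕ) : ℂ) = n * (s + x) := by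
    push_cast; rw [hpx]; ring
  have key := Ring.mul_choose_succ_mul_choose_eq x a s
  clear_value x
  rw [hi] at hi0 ⊢
  rw [hj] at hj0 ⊢
  have ha0 := right_ne_zero_of_mul hi0
  have hs0 := right_ne_zero_of_mul hj0
  push_cast
  rw [hpx, show (a : ℂ) + 1 + s = a + s + 1 by ring]
  field_simp
  linear_combination α ^ (a + s + 1) * key

theorem coeff_Qseries_mul_succ (hn : n ≠ 0) (hq : HasQCoeffs n α q)
    (hzero : ∀ i j : ℕ, (¬ (n ∣ (i + j)) ∨ n ∣ j) → q i j = 0) (K : ℕ) :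
    coeff (n * (K + 1)) (Qseries q) = (n - 1) * α ^ (K + 1) / (n * (K + 1)) := by
  rw [Qseries, coeff_mk, Finset.Nat.sum_antidiagonal_mul_succ K _ fun i j hj => by
    simp [hzero i j (Or.inr hj)]]
  calc ∑ p ∈ Ico 1 n, ∑ as ∈ antidiagonal K,
        (if 1 ≤ n * (as.1 + 1) - p ∧ 1 ≤ n * as.2 + p then
          q (n * (as.1 + 1) - p) (n * as.2 + p)
            / (((n * (as.1 + 1) - p : ℕ) : ℂ) * ((n * as.2 + p : ℕ) : ℂ)) else 0)
      = ∑ p ∈ Ico 1 n, α ^ (K + 1) / (n * (K + 1))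
          * ∑ as ∈ antidiagonal K,
            Ring.multichoose (1 - p / n : ℂ) as.1 * Ring.multichoose (p / n : ℂ) as.2 := by
        refine sum_congr rfl fun p hp => ?_
        rw [mem_Ico] at hp
        rw [mul_sum]
        refine sum_congr rfl fun as has => ?_
        rw [HasAntidiagonal.mem_antidiagonal] at has
        have hlt : p < n * (as.1 + 1) := hp.2.trans_le (Nat.le_mul_of_pos_right n as.1.succ_pos)
        rw [if_pos ⟨by omega, by omega⟩, Qseries_summand hq hp.1 hp.2, ← has]
        push_cast
        rfl
    _ = (n - 1) * α ^ (K + 1) / (n * (K + 1)) := by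
        simp only [← Ring.add_multichoose_eq, sub_add_cancel, Ring.multichoose_one, mul_one,
          sum_const, Nat.card_Ico, nsmul_eq_mul]
        rw [Nat.cast_sub (Nat.one_le_iff_ne_zero.mpr hn)]
        push_cast
        ring

theorem Qseries_eq_subst_log (hn : n ≠ 0) (hq : HasQCoeffs n α q)
    (hzero : ∀ i j : ℕ, (¬ (n ∣ (i + j)) ∨ n ∣ j) → q i j = 0) :
    Qseries q = (((1 - n : ℂ) / n) • log ℂ).subst ((-α) • X ^ n : ℂ⟦X⟧) := by
  ext N
  rw [coeff_subst_smul_X_pow hn]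
  split_ifs with hN
  · obtain ⟨m, rfl⟩ := hN
    rw [Nat.mul_div_cancel_left m (Nat.pos_of_ne_zero hn)]
    cases m with
    | zero => simp [Qseries]
    | succ K =>
      have hn' : (n : ℂ) ≠ 0 := Nat.cast_ne_zero.mpr hn
      have hK : (K + 1 : ℂ) ≠ 0 := Nat.cast_add_one_ne_zero K
      have hsq : (-1 : ℂ) ^ (K + 1) * (-1) ^ (K + 1) = 1 := by rw [← mul_pow]; simp
      rw [coeff_Qseries_mul_succ hn hq hzero, coeff_smul, coeff_log, if_neg K.succ_ne_zero,
        neg_pow, smul_eq_mul, map_div₀, map_pow, map_neg, map_one, map_natCast,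
        pow_succ _ (K + 1)]
      push_cast
      field_simp
      linear_combination (1 - (n : ℂ)) * α ^ (K + 1) * hsq
  · rw [Qseries, coeff_mk]
    refine sum_eq_zero fun ij hij => ?_
    rw [HasAntidiagonal.mem_antidiagonal] at hij
    simp [hzero ij.1 ij.2 (Or.inl (hij ▸ hN))]

end Qseries

theorem exp_Q_eq_binomial_series_general (n : ℕ) (hn : 2 ≤ n) (α : ℂ) (q : ℕ → ℕ → ℂ)
    (hq : ∀ r s p : ℕ, 1 ≤ r → 1 ≤ p → p ≤ n - 1 →
      q (n * r - p) (n * s + p)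
        = α ^ (r + s) * ((p : ℂ) * r / ((r : ℂ) + s))
            * cchoose ((r : ℂ) - (p : ℂ) / (n : ℂ)) r
            * cchoose ((s : ℂ) + (p : ℂ) / (n : ℂ)) s)
    (hzero : ∀ i j : ℕ, (¬ (n ∣ (i + j)) ∨ n ∣ j) → q i j = 0) :
    psExp (Qseries q)
      = PowerSeries.mk fun N =>
          if n ∣ N then (-α) ^ (N / n) * cchoose ((1 - (n : ℂ)) / (n : ℂ)) (N / n)
          else 0 := by
  have hn0 : n ≠ 0 := by omega
  have hu : HasSubst ((-α) • X ^ n : ℂ⟦X⟧) := HasSubst.smul' _ (.X_pow hn0)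
  have hQ0 : constantCoeff (Qseries q) = 0 := by
    rw [Qseries_eq_subst_log hn0 hq hzero,
      constantCoeff_subst_of_constantCoeff_eq_zero (by simp [hn0])]
    simp
  rw [psExp_eq_exp_subst hQ0, Qseries_eq_subst_log hn0 hq hzero,
    ← subst_comp_subst_apply (HasSubst.smul' _ HasSubst.log) hu, exp_subst_smul_log]
  ext N
  rw [coeff_subst_smul_X_pow hn0, coeff_mk]
  simp [cchoose_eq_choose]

/-- Corollary 8.3 (ii) of the paper: `e^{q([z]|[z])} = (1-αz^n)^{(1-n)/n}` as formal
power series, where the right-hand side is the binomial series. -/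
theorem exp_Q_eq_binomial_series (n : ℕ) (hn : 2 ≤ n) (α : ℂ) (q : ℕ → ℕ → ℂ)
    (hq : ∀ r s p : ℕ, 1 ≤ r → 1 ≤ p → p ≤ n - 1 →
      q (n * r - p) (n * s + p)
        = α ^ (r + s) * ((p : ℂ) * r / ((r : ℂ) + s))
            * cchoose ((r : ℂ) - (p : ℂ) / (n : ℂ)) r
            * cchoose ((s : ℂ) + (p : ℂ) / (n : ℂ)) s)
    (hsym : ∀ i j : ℕ, q i j = q j i)
    (hzero : ∀ i j : ℕ, (¬ (n ∣ (i + j)) ∨ n ∣ j) → q i j = 0) :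
    psExp (Qseries q)
      = PowerSeries.mk fun N =>
          if n ∣ N then (-α) ^ (N / n) * cchoose ((1 - (n : ℂ)) / (n : ℂ)) (N / n)
          else 0 :=
  exp_Q_eq_binomial_series_general n hn α q hq hzero
end
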